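/- arXiv:2007.02490 — 7 statements merged into one kernel-verified Lean document; each statement's English description precedes it below -/
import Mathlib

section
/- Let H_A = ℂ^a, H_B = ℂ^b, H_C = ℂ^c be finite-dimensional spaces and let U be a matrix on (H_A ⊗ H_B) ⊗ H_C that can be written as U = ∑_{j=1}^r Q_j ⊗ R_j, where Q_1, ..., Q_r are linearly independent (ab)×(ab) complex matrices (acting on H_A ⊗ H_B) and R_1, ..., R_r are linearly independent c×c complex matrices. Then the tripartite Schmidt rank of U equals the minimum number m for which there exist product matrices P_1 = X_1 ⊗ Y_1, ..., P_m = X_m ⊗ Y_m (with X_i an a×a matrix and Y_i a b×b matrix, the tensor being the Kronecker product) such that span{Q_1, ..., Q_r} ⊆ span{P_1, ..., P_m}. -/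
/-!
Slicing the last tensor factor with the functionals dual to the linearly independent `R j`
recovers each `Q j` from any decomposition `U = ∑ i, (A i ⊗ B i) ⊗ C i`, so `Q j` lies in the
span of the product matrices `A i ⊗ B i`. Conversely, if every `Q j = ∑ i, q j i • P i`, then
`U = ∑ i, P i ⊗ (∑ j, q j i • R j)`. Hence both infima range over the same set of lengths.
-/

open Matrix Kronecker

/-- Tripartite Schmidt rank of a matrix on (ℂ^a ⊗ ℂ^b) ⊗ ℂ^c. -/
noncomputable def sr3 {a b c : ℕ}
    (U : Matrix ((Fin a × Fin b) × Fin c) ((Fin a × Fin b) × Fin c) ℂ) : ℕ :=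
  sInf {r | ∃ (A : Fin r → Matrix (Fin a) (Fin a) ℂ)
    (B : Fin r → Matrix (Fin b) (Fin b) ℂ) (C : Fin r → Matrix (Fin c) (Fin c) ℂ),
    U = ∑ j, (A j ⊗ₖ B j) ⊗ₖ C j}

lemma LinearIndependent.exists_dual_apply_eq_ite {K V ι : Type*} [Field K] [AddCommGroup V]
    [Module K V] [DecidableEq ι] {v : ι → V} (hv : LinearIndependent K v) :
    ∃ f : ι → Module.Dual K V, ∀ i j, f i (v j) = if j = i then 1 else 0 := by
  obtain ⟨g, hg⟩ := LinearMap.exists_extend hv.repr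
  have hgv (j : ι) : g (v j) = Finsupp.single j 1 := by
    have hmem : v j ∈ Submodule.span K (Set.range v) := Submodule.subset_span ⟨j, rfl⟩
    rw [← hv.repr_eq_single j ⟨v j, hmem⟩ rfl, ← hg]
    rfl
  exact ⟨fun i => Finsupp.lapply i ∘ₗ g, fun i j => by simp [hgv, Finsupp.single_apply]⟩

namespace Matrix

variable {K α β γ δ : Type*}

def contractRight [CommSemiring K] (f : Matrix γ δ K →ₗ[K] K) :
    Matrix (α × γ) (β × δ) K →ₗ[K] Matrix α β K where
  toFun M := of fun p q => f (M.submatrix (Prod.mk p) (Prod.mk q))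
  map_add' M N := by ext; simp [submatrix_add]
  map_smul' r M := by ext; simp [submatrix_smul]

theorem contractRight_kronecker [CommSemiring K] (f : Matrix γ δ K →ₗ[K] K)
    (P : Matrix α β K) (C : Matrix γ δ K) : contractRight f (P ⊗ₖ C) = f C • P := by
  ext p q
  have : (P ⊗ₖ C).submatrix (Prod.mk p) (Prod.mk q) = P p q • C := by ext; simp
  simp [contractRight, this, mul_comm]

variable {ι κ : Type*}

theorem sum_kronecker [NonUnitalNonAssocSemiring K] (s : Finset ι) (A : ι → Matrix α β K)
    (B : Matrix γ δ K) : (∑ i ∈ s, A i) ⊗ₖ B = ∑ i ∈ s, A i ⊗ₖ B := by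
  ext
  simp [sum_apply, Finset.sum_mul]

theorem kronecker_sum [NonUnitalNonAssocSemiring K] (s : Finset ι) (A : Matrix α β K)
    (B : ι → Matrix γ δ K) : A ⊗ₖ (∑ i ∈ s, B i) = ∑ i ∈ s, A ⊗ₖ B i := by
  ext
  simp [sum_apply, Finset.mul_sum]

variable [Fintype ι] [Fintype κ]

theorem span_range_le_of_sum_kronecker_eq [Field K] {Q : ι → Matrix α β K}
    {R : ι → Matrix γ δ K} (hR : LinearIndependent K R) {P : κ → Matrix α β K}
    {C : κ → Matrix γ δ K} (h : ∑ j, Q j ⊗ₖ R j = ∑ i, P i ⊗ₖ C i) :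
    Submodule.span K (Set.range Q) ≤ Submodule.span K (Set.range P) := by
  classical
  obtain ⟨f, hf⟩ := hR.exists_dual_apply_eq_ite
  rw [Submodule.span_le]
  rintro _ ⟨k, rfl⟩
  have hk := congr_arg (contractRight (f k)) h
  simp only [map_sum, contractRight_kronecker, hf, ite_smul, one_smul, zero_smul,
    Finset.sum_ite_eq', Finset.mem_univ, if_true] at hk
  rw [hk]
  exact Submodule.sum_mem _ fun i _ => Submodule.smul_mem _ _ (Submodule.subset_span ⟨i, rfl⟩)

theorem exists_sum_kronecker_eq_of_span_range_le [CommSemiring K] {Q : ι → Matrix α β K}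
    (R : ι → Matrix γ δ K) {P : κ → Matrix α β K}
    (h : Submodule.span K (Set.range Q) ≤ Submodule.span K (Set.range P)) :
    ∃ C : κ → Matrix γ δ K, ∑ j, Q j ⊗ₖ R j = ∑ i, P i ⊗ₖ C i := by
  choose coeff hcoeff using fun j =>
    (Submodule.mem_span_range_iff_exists_fun K).1 (h (Submodule.subset_span ⟨j, rfl⟩))
  refine ⟨fun i => ∑ j, coeff j i • R j, ?_⟩
  simp only [← hcoeff, sum_kronecker, kronecker_sum, smul_kronecker, kronecker_smul]
  exact Finset.sum_comm

theorem exists_sum_kronecker_eq_iff_span_range_le [Field K] {Q : ι → Matrix α β K}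
    {R : ι → Matrix γ δ K} (hR : LinearIndependent K R) (P : κ → Matrix α β K) :
    (∃ C : κ → Matrix γ δ K, ∑ j, Q j ⊗ₖ R j = ∑ i, P i ⊗ₖ C i) ↔
      Submodule.span K (Set.range Q) ≤ Submodule.span K (Set.range P) :=
  ⟨fun ⟨_, h⟩ => span_range_le_of_sum_kronecker_eq hR h,
    exists_sum_kronecker_eq_of_span_range_le R⟩

end Matrix

theorem stmt0_general {a b c r : ℕ}
    (U : Matrix ((Fin a × Fin b) × Fin c) ((Fin a × Fin b) × Fin c) ℂ)
    (Q : Fin r → Matrix (Fin a × Fin b) (Fin a × Fin b) ℂ)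
    (R : Fin r → Matrix (Fin c) (Fin c) ℂ)
    (hR : LinearIndependent ℂ R)
    (hU : U = ∑ j, Q j ⊗ₖ R j) :
    sr3 U = sInf {m | ∃ (X : Fin m → Matrix (Fin a) (Fin a) ℂ)
      (Y : Fin m → Matrix (Fin b) (Fin b) ℂ),
      Submodule.span ℂ (Set.range Q) ≤
        Submodule.span ℂ (Set.range fun i => X i ⊗ₖ Y i)} := by
  subst hU
  unfold sr3
  congr 1
  ext m
  exact exists₂_congr fun X Y => exists_sum_kronecker_eq_iff_span_range_le hR _

theorem stmt0 {a b c r : ℕ}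
    (U : Matrix ((Fin a × Fin b) × Fin c) ((Fin a × Fin b) × Fin c) ℂ)
    (Q : Fin r → Matrix (Fin a × Fin b) (Fin a × Fin b) ℂ)
    (R : Fin r → Matrix (Fin c) (Fin c) ℂ)
    (hQ : LinearIndependent ℂ Q) (hR : LinearIndependent ℂ R)
    (hU : U = ∑ j, Q j ⊗ₖ R j) :
    sr3 U = sInf {m | ∃ (X : Fin m → Matrix (Fin a) (Fin a) ℂ)
      (Y : Fin m → Matrix (Fin b) (Fin b) ℂ),
      Submodule.span ℂ (Set.range Q) ≤
        Submodule.span ℂ (Set.range fun i => X i ⊗ₖ Y i)} :=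
  stmt0_general U Q R hR hU
end

section
/- The 8×8 complex matrix U₃ = (1/√3)(I₂⊗I₂⊗I₂ + i·σ₁⊗σ₁⊗σ₁ + i·σ₃⊗σ₃⊗σ₃) is unitary and has Schmidt rank exactly 3. -/
open Matrix Kronecker Complex

/-- The tripartite Schmidt rank of an 8×8 complex matrix, viewed as a matrix on
ℂ² ⊗ ℂ² ⊗ ℂ² via Kronecker products: the least `r` such that
`U = ∑ j, A j ⊗ₖ (B j ⊗ₖ C j)` with 2×2 matrices `A j`, `B j`, `C j`. -/
noncomputable def sr (U : Matrix (Fin 2 × Fin 2 × Fin 2) (Fin 2 × Fin 2 × Fin 2) ℂ) : ℕ :=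
  sInf {r | ∃ A B C : Fin r → Matrix (Fin 2) (Fin 2) ℂ,
    U = ∑ j, A j ⊗ₖ (B j ⊗ₖ C j)}

def S0 : Matrix (Fin 2) (Fin 2) ℂ := !![1, 0; 0, 0]
def S1 : Matrix (Fin 2) (Fin 2) ℂ := !![0, 1; 0, 0]
def S2 : Matrix (Fin 2) (Fin 2) ℂ := !![0, 0; 1, 0]
def S3 : Matrix (Fin 2) (Fin 2) ℂ := !![0, 0; 0, 1]
def σ1 : Matrix (Fin 2) (Fin 2) ℂ := !![0, 1; 1, 0]
def σ2 : Matrix (Fin 2) (Fin 2) ℂ := !![0, -I; I, 0]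
def σ3 : Matrix (Fin 2) (Fin 2) ℂ := !![1, 0; 0, -1]
def I2 : Matrix (Fin 2) (Fin 2) ℂ := 1

noncomputable def U₃ : Matrix (Fin 2 × Fin 2 × Fin 2) (Fin 2 × Fin 2 × Fin 2) ℂ :=
  (Real.sqrt 3 : ℂ)⁻¹ • (I2 ⊗ₖ (I2 ⊗ₖ I2) + I • (σ1 ⊗ₖ (σ1 ⊗ₖ σ1)) + I • (σ3 ⊗ₖ (σ3 ⊗ₖ σ3)))

/-!
Put `Y = σ₁ ⊗ σ₁ ⊗ σ₁` and `Z = σ₃ ⊗ σ₃ ⊗ σ₃`. Since `σ₁` and `σ₃` are anticommuting Hermitian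
involutions and the sign survives an odd number of tensor factors, so are `Y` and `Z`; hence
`W = Y + Z` is Hermitian with `W² = 2`, and `(1 + i W) / √3` is unitary.

The defining formula shows `sr U₃ ≤ 3`. Conversely, a decomposition `U = ∑ⱼ Aⱼ ⊗ Mⱼ` with `r`
terms factors the realignment of `U` (the matrix with entry `U (a, b) (a', b')` in row `(a, a')`
and column `(b, b')`) through `r` dimensions, so its rank is at most `r`; for `U₃` the
realignment has a `3 × 3` minor of determinant `-4 / √3³ ≠ 0`.
-/

section

variable {R : Type*} [Ring R]

theorem add_mul_self_eq_two {Y Z : R} (hYY : Y * Y = 1) (hZZ : Z * Z = 1)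
    (hYZ : Y * Z = -(Z * Y)) : (Y + Z) * (Y + Z) = 2 := by
  rw [add_mul, mul_add, mul_add, hYY, hZZ, hYZ, ← one_add_one_eq_two]; abel

variable [StarRing R] [Algebra ℂ R] [StarModule ℂ R]

theorem smul_one_add_I_smul_mem_unitary {W : R} (hW : IsSelfAdjoint W) (hWW : W * W = 2) :
    (Real.sqrt 3 : ℂ)⁻¹ • (1 + I • W) ∈ unitary R := by
  set c : ℂ := (Real.sqrt 3 : ℂ)⁻¹
  have hc : star c = c := by simp [c]
  have hcc : c * c * 3 = 1 := by
    rw [← mul_inv, ← Complex.ofReal_mul, Real.mul_self_sqrt (by norm_num)]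
    norm_num
  have hstar : star (1 + I • W) = 1 - I • W := by
    rw [star_add, star_one, star_smul, hW.star_eq, Complex.star_def, Complex.conj_I, neg_smul,
      sub_eq_add_neg]
  have hsq : (I • W) * (I • W) = -2 := by
    rw [smul_mul_smul_comm, I_mul_I, hWW, neg_one_smul]
  rw [Unitary.mem_iff, star_smul, hstar, hc, smul_mul_smul_comm, smul_mul_smul_comm]
  generalize I • W = X at hsq ⊢
  have h3 : (3 : R) = (3 : ℂ) • 1 := by rw [ofNat_smul_eq_nsmul, nsmul_one, Nat.cast_ofNat]
  have hprod : (1 - X) * (1 + X) = 3 := by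
    rw [show (1 - X) * (1 + X) = 1 - X * X by noncomm_ring, hsq]; norm_num
  have hprod' : (1 + X) * (1 - X) = 3 := by
    rw [show (1 + X) * (1 - X) = 1 - X * X by noncomm_ring, hsq]; norm_num
  rw [hprod, hprod', h3, smul_smul, hcc, one_smul]
  exact ⟨rfl, rfl⟩

end

section KroneckerCube

variable {n α : Type*} [CommRing α]

theorem kronecker_cube_mul_kronecker_cube [Fintype n] (a b : Matrix n n α) :
    (a ⊗ₖ (a ⊗ₖ a)) * (b ⊗ₖ (b ⊗ₖ b)) = (a * b) ⊗ₖ ((a * b) ⊗ₖ (a * b)) := by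
  rw [← mul_kronecker_mul, ← mul_kronecker_mul]

theorem kronecker_cube_mul_self_eq_one [Fintype n] [DecidableEq n] {a : Matrix n n α}
    (ha : a * a = 1) : (a ⊗ₖ (a ⊗ₖ a)) * (a ⊗ₖ (a ⊗ₖ a)) = 1 := by
  rw [kronecker_cube_mul_kronecker_cube, ha, one_kronecker_one, one_kronecker_one]

theorem kronecker_cube_neg (a : Matrix n n α) :
    (-a) ⊗ₖ ((-a) ⊗ₖ (-a)) = -(a ⊗ₖ (a ⊗ₖ a)) := by
  ext ⟨i, j, k⟩ ⟨i', j', k'⟩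
  simp [kroneckerMap_apply]

theorem kronecker_cube_anticomm [Fintype n] {a b : Matrix n n α} (h : a * b = -(b * a)) :
    (a ⊗ₖ (a ⊗ₖ a)) * (b ⊗ₖ (b ⊗ₖ b)) = -((b ⊗ₖ (b ⊗ₖ b)) * (a ⊗ₖ (a ⊗ₖ a))) := by
  rw [kronecker_cube_mul_kronecker_cube, kronecker_cube_mul_kronecker_cube, h, kronecker_cube_neg]

theorem IsSelfAdjoint.kronecker_cube [StarRing α] {a : Matrix n n α} (ha : IsSelfAdjoint a) :
    IsSelfAdjoint (a ⊗ₖ (a ⊗ₖ a)) := by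
  rw [IsSelfAdjoint, star_eq_conjTranspose, conjTranspose_kronecker, conjTranspose_kronecker,
    ← star_eq_conjTranspose, ha.star_eq]

end KroneckerCube

theorem σ1_mul_self : σ1 * σ1 = 1 := by
  rw [σ1, mul_fin_two, one_fin_two]; norm_num

theorem σ3_mul_self : σ3 * σ3 = 1 := by
  rw [σ3, mul_fin_two, one_fin_two]; norm_num

theorem σ1_mul_σ3 : σ1 * σ3 = -(σ3 * σ1) := by
  rw [σ1, σ3, mul_fin_two, mul_fin_two, neg_of]; norm_num

theorem isSelfAdjoint_σ1 : IsSelfAdjoint σ1 := by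
  ext i j; fin_cases i <;> fin_cases j <;> simp [σ1]

theorem isSelfAdjoint_σ3 : IsSelfAdjoint σ3 := by
  ext i j; fin_cases i <;> fin_cases j <;> simp [σ3]

theorem U₃_mem_unitaryGroup : U₃ ∈ unitaryGroup (Fin 2 × Fin 2 × Fin 2) ℂ := by
  have hY := isSelfAdjoint_σ1.kronecker_cube
  have hZ := isSelfAdjoint_σ3.kronecker_cube
  have hsq := add_mul_self_eq_two (kronecker_cube_mul_self_eq_one σ1_mul_self)
    (kronecker_cube_mul_self_eq_one σ3_mul_self) (kronecker_cube_anticomm σ1_mul_σ3)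
  have h1 : I2 ⊗ₖ (I2 ⊗ₖ I2) = 1 := by rw [I2, one_kronecker_one, one_kronecker_one]
  rw [U₃, h1, add_assoc, ← smul_add]
  exact smul_one_add_I_smul_mem_unitary (hY.add hZ) hsq

namespace Matrix

variable {l m p q R : Type*}

def realignment (U : Matrix (l × p) (m × q) R) : Matrix (l × m) (p × q) R :=
  of fun x y => U (x.1, y.1) (x.2, y.2)

variable [CommRing R]

theorem realignment_sum_kronecker {r : ℕ} (A : Fin r → Matrix l m R)
    (M : Fin r → Matrix p q R) :
    realignment (∑ j, A j ⊗ₖ M j) =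
      (of fun x j => A j x.1 x.2) * (of fun j y => M j y.1 y.2) := by
  ext x y
  simp [realignment, mul_apply, sum_apply, kroneckerMap_apply]

theorem rank_realignment_sum_kronecker_le [StrongRankCondition R] [Fintype p] [Fintype q]
    {r : ℕ} (A : Fin r → Matrix l m R) (M : Fin r → Matrix p q R) :
    (realignment (∑ j, A j ⊗ₖ M j)).rank ≤ r := by
  rw [realignment_sum_kronecker]
  exact (rank_mul_le_left _ _).trans (rank_le_card_width _ |>.trans_eq (Fintype.card_fin r))

end Matrix

theorem sr_eq_of_eq_sum_of_le_rank {U : Matrix (Fin 2 × Fin 2 × Fin 2) (Fin 2 × Fin 2 × Fin 2) ℂ}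
    {r : ℕ} (A B C : Fin r → Matrix (Fin 2) (Fin 2) ℂ) (hU : U = ∑ j, A j ⊗ₖ (B j ⊗ₖ C j))
    (hr : r ≤ (realignment U).rank) : sr U = r := by
  refine le_antisymm (Nat.sInf_le ⟨A, B, C, hU⟩) (le_csInf ⟨r, A, B, C, hU⟩ ?_)
  rintro k ⟨A', B', C', rfl⟩
  exact hr.trans (rank_realignment_sum_kronecker_le A' fun j => B' j ⊗ₖ C' j)

theorem U₃_eq_sum : U₃ = ∑ j, ![(Real.sqrt 3 : ℂ)⁻¹ • I2, ((Real.sqrt 3 : ℂ)⁻¹ * I) • σ1,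
    ((Real.sqrt 3 : ℂ)⁻¹ * I) • σ3] j ⊗ₖ (![I2, σ1, σ3] j ⊗ₖ ![I2, σ1, σ3] j) := by
  simp only [Fin.sum_univ_three, cons_val_zero, cons_val_one, cons_val_two, head_cons, tail_cons,
    smul_kronecker, U₃]
  module

theorem three_le_rank_realignment_U₃ : 3 ≤ (realignment U₃).rank := by
  set c : ℂ := (Real.sqrt 3 : ℂ)⁻¹
  set N := (realignment U₃).submatrix ![(0, 0), (1, 1), (0, 1)]
    ![((0, 0), (0, 0)), ((0, 1), (0, 1)), ((0, 0), (1, 1))]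
  have hN : N = c • !![1 + I, 1 - I, 0; 1 - I, 1 + I, 0; 0, 0, I] := by
    ext s t
    simp only [N, U₃, I2, one_fin_two]
    fin_cases s <;> fin_cases t <;> simp [c, realignment, σ1, σ3] <;> ring
  have hdet : N.det = -4 * c ^ 3 := by
    rw [hN, det_smul, det_fin_three]
    simp only [Fintype.card_fin, Fin.isValue, of_apply, cons_val', cons_val_zero,
      cons_val_fin_one, cons_val_one, cons_val, mul_zero, sub_zero, add_zero, zero_mul, neg_mul]
    linear_combination 4 * c ^ 3 * I_sq
  have hrank : N.rank = 3 := by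
    rw [rank_of_isUnit N ((isUnit_iff_isUnit_det N).2 (by simp [hdet, c])), Fintype.card_fin]
  exact hrank.ge.trans (rank_submatrix_le _ _ _)

theorem stmt3 : U₃ ∈ Matrix.unitaryGroup (Fin 2 × Fin 2 × Fin 2) ℂ ∧ sr U₃ = 3 :=
  ⟨U₃_mem_unitaryGroup, sr_eq_of_eq_sum_of_le_rank _ _ _ U₃_eq_sum three_le_rank_realignment_U₃⟩
end

section
/- The 8×8 complex matrix U₅ = (1/2)·S₀⊗(I₂⊗I₂ + σ₁⊗σ₁ + σ₂⊗σ₂ + σ₃⊗σ₃) + S₃⊗I₂⊗σ₁ is unitary and has Schmidt rank exactly 5. -/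
open Matrix Kronecker Complex

noncomputable def U₅ : Matrix (Fin 2 × Fin 2 × Fin 2) (Fin 2 × Fin 2 × Fin 2) ℂ :=
  (1 / 2 : ℂ) • (S0 ⊗ₖ (I2 ⊗ₖ I2 + σ1 ⊗ₖ σ1 + σ2 ⊗ₖ σ2 + σ3 ⊗ₖ σ3)) + S3 ⊗ₖ (I2 ⊗ₖ σ1)

/-!
The five-term expansion of `U₅` is read off from its definition, and since
`½ (I ⊗ I + σ₁ ⊗ σ₁ + σ₂ ⊗ σ₂ + σ₃ ⊗ σ₃)` is the swap gate, `U₅ = S₀ ⊗ SWAP + S₃ ⊗ (I ⊗ σ₁)` is a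
controlled unitary.

For the lower bound, suppose `U = ∑_{j<r} A_j ⊗ B_j ⊗ C_j`. Fixing an entry `(a, a')` of the first
factor gives the block `U_{aa'} = ∑_j A_j(a, a') • B_j ⊗ C_j`, and the realignment
`B ⊗ C ↦ vec B (vec C)ᵀ` turns it into `P · diag (A_j(a, a')) · Q`. Choosing `t` to cancel one of
the coefficients of `U₀₀ - t U₁₁` shows that its realignment has rank `< r`. For `U₅` this
realignment is `SWAP - t N`, where `N`, the realignment of `I ⊗ σ₁`, is rank one, commutes with
`SWAP` and squares to zero; so it is invertible of rank `4`, and `r ≥ 5`.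
-/

namespace Matrix

variable {R K l l' m m' n n' ι : Type*}

def realign (M : Matrix (m × n) (m' × n') R) : Matrix (m × m') (n × n') R :=
  of fun i k => M (i.1, k.1) (i.2, k.2)

theorem realign_sub_smul [Ring R] (M N : Matrix (m × n) (m' × n') R) (t : R) :
    realign (M - t • N) = realign M - t • realign N :=
  rfl

theorem realign_kronecker [Mul R] (B : Matrix m m' R) (C : Matrix n n' R) :
    realign (B ⊗ₖ C) = vecMulVec (fun p => B p.1 p.2) (fun q => C q.1 q.2) :=
  rfl

theorem realign_sum_smul_kronecker [CommSemiring R] [Fintype ι] [DecidableEq ι] (c : ι → R)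
    (B : ι → Matrix m m' R) (C : ι → Matrix n n' R) :
    realign (∑ j, c j • (B j ⊗ₖ C j)) =
      of (fun p j => B j p.1 p.2) * diagonal c * of (fun j q => C j q.1 q.2) := by
  ext p q
  simp [realign, mul_apply, Matrix.sum_apply, diagonal_apply]
  exact Finset.sum_congr rfl fun _ _ => by ring

theorem rank_realign_sum_smul_kronecker_le [Field K] [DecidableEq K] [Fintype ι] [Fintype n]
    [Fintype n'] (c : ι → K) (B : ι → Matrix m m' K) (C : ι → Matrix n n' K) :
    (realign (∑ j, c j • (B j ⊗ₖ C j))).rank ≤ Fintype.card {j // c j ≠ 0} := by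
  classical
  rw [realign_sum_smul_kronecker]
  exact (rank_mul_le_left _ _).trans ((rank_mul_le_right _ _).trans (rank_diagonal c).le)

theorem sum_kronecker_submatrix_prodMk [CommSemiring R] [Fintype ι] (A : ι → Matrix l l' R)
    (M : ι → Matrix m m' R) (a : l) (a' : l') :
    (∑ j, A j ⊗ₖ M j).submatrix (Prod.mk a) (Prod.mk a') = ∑ j, A j a a' • M j := by
  ext p q
  simp [Matrix.sum_apply]

theorem exists_rank_realign_sub_smul_lt [Field K] [Fintype ι] [Fintype n] [Fintype n']
    {A : ι → Matrix l l' K} {B : ι → Matrix m m' K} {C : ι → Matrix n n' K}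
    {U : Matrix (l × m × n) (l' × m' × n') K} (hU : U = ∑ j, A j ⊗ₖ (B j ⊗ₖ C j))
    (a : l) (a' : l') (b : l) (b' : l') (hb : U.submatrix (Prod.mk b) (Prod.mk b') ≠ 0) :
    ∃ t : K, (realign (U.submatrix (Prod.mk a) (Prod.mk a') -
      t • U.submatrix (Prod.mk b) (Prod.mk b'))).rank < Fintype.card ι := by
  classical
  have slice (x : l) (x' : l') :
      U.submatrix (Prod.mk x) (Prod.mk x') = ∑ j, A j x x' • (B j ⊗ₖ C j) := by
    rw [hU, sum_kronecker_submatrix_prodMk]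
  obtain ⟨j₀, hj₀⟩ : ∃ j, A j b b' ≠ 0 := by
    by_contra! h
    exact hb (by simp [slice, h])
  set t := A j₀ a a' / A j₀ b b'
  refine ⟨t, ?_⟩
  have hcomb : U.submatrix (Prod.mk a) (Prod.mk a') - t • U.submatrix (Prod.mk b) (Prod.mk b') =
      ∑ j, (A j a a' - t * A j b b') • (B j ⊗ₖ C j) := by
    simp only [slice, Finset.smul_sum, smul_smul, sub_smul, Finset.sum_sub_distrib]
  calc _ ≤ Fintype.card {j // A j a a' - t * A j b b' ≠ 0} := by
        rw [hcomb]; exact rank_realign_sum_smul_kronecker_le _ _ _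
    _ < Fintype.card ι := Fintype.card_subtype_lt (x := j₀) (by simp [t, div_mul_cancel₀ _ hj₀])

section Unitary

variable [CommRing R] [StarRing R] [Fintype m] [DecidableEq m] [Fintype n] [DecidableEq n]

theorem permMatrix_mem_unitaryGroup (σ : Equiv.Perm n) : σ.permMatrix R ∈ unitaryGroup n R := by
  rw [mem_unitaryGroup_iff, star_eq_conjTranspose, conjTranspose_permMatrix, ← permMatrix_mul,
    inv_mul_cancel, permMatrix_one]

theorem kronecker_add_kronecker_mem_unitaryGroup {P Q : Matrix m m R}
    (hP : IsStarProjection P) (hQ : IsStarProjection Q) (hPQ : P * Q = 0) (hsum : P + Q = 1)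
    {V W : Matrix n n R} (hV : V ∈ unitaryGroup n R) (hW : W ∈ unitaryGroup n R) :
    P ⊗ₖ V + Q ⊗ₖ W ∈ unitaryGroup (m × n) R := by
  have hQP : Q * P = 0 := by
    simpa [hP.isSelfAdjoint.star_eq, hQ.isSelfAdjoint.star_eq] using congrArg star hPQ
  rw [mem_unitaryGroup_iff, star_add, star_eq_conjTranspose, star_eq_conjTranspose,
    conjTranspose_kronecker, conjTranspose_kronecker, ← star_eq_conjTranspose,
    ← star_eq_conjTranspose, ← star_eq_conjTranspose, ← star_eq_conjTranspose,
    hP.isSelfAdjoint.star_eq, hQ.isSelfAdjoint.star_eq]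
  simp only [add_mul, mul_add, ← mul_kronecker_mul, hP.isIdempotentElem.eq,
    hQ.isIdempotentElem.eq, hPQ, hQP, zero_kronecker, add_zero, zero_add,
    mem_unitaryGroup_iff.mp hV, mem_unitaryGroup_iff.mp hW, ← add_kronecker, hsum,
    one_kronecker_one]

end Unitary

end Matrix

theorem isUnit_sub_smul_of_commute_of_mul_self_eq_zero {K R : Type*} [CommRing K] [Ring R]
    [Algebra K R] {u n : R} (hu : IsUnit u) (hcomm : Commute n u) (hn : n * n = 0) (t : K) :
    IsUnit (u - t • n) := by
  have hnil : IsNilpotent (-(t • n)) := ⟨2, by rw [neg_sq, sq, smul_mul_smul, hn, smul_zero]⟩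
  rw [sub_eq_add_neg]
  exact hnil.isUnit_add_left_of_commute hu (hcomm.smul_left t).neg_left

def swapGate (n R : Type*) [DecidableEq n] [Zero R] [One R] : Matrix (n × n) (n × n) R :=
  Equiv.Perm.permMatrix R (Equiv.prodComm n n)

theorem realign_swapGate (n R : Type*) [DecidableEq n] [Zero R] [One R] :
    realign (swapGate n R) = swapGate n R := by
  ext ⟨i, i'⟩ ⟨k, k'⟩
  simp [realign, swapGate, PEquiv.toMatrix_apply, eq_comm]

theorem pauli_sum_eq_swapGate :
    (1 / 2 : ℂ) • (I2 ⊗ₖ I2 + σ1 ⊗ₖ σ1 + σ2 ⊗ₖ σ2 + σ3 ⊗ₖ σ3) = swapGate (Fin 2) ℂ := by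
  ext ⟨b, c⟩ ⟨b', c'⟩
  fin_cases b <;> fin_cases c <;> fin_cases b' <;> fin_cases c' <;>
    simp [swapGate, I2, σ1, σ2, σ3, one_apply] <;> ring_nf

theorem isStarProjection_S0 : IsStarProjection S0 := by
  refine ⟨?_, ?_⟩ <;> ext i j <;> fin_cases i <;> fin_cases j <;> simp [S0]

theorem isStarProjection_S3 : IsStarProjection S3 := by
  refine ⟨?_, ?_⟩ <;> ext i j <;> fin_cases i <;> fin_cases j <;> simp [S3]

theorem σ1_mem_unitaryGroup : σ1 ∈ unitaryGroup (Fin 2) ℂ := by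
  rw [mem_unitaryGroup_iff, star_eq_conjTranspose]
  ext i j; fin_cases i <;> fin_cases j <;> simp [σ1, mul_apply]

theorem U₅_eq : U₅ = S0 ⊗ₖ swapGate (Fin 2) ℂ + S3 ⊗ₖ (I2 ⊗ₖ σ1) := by
  rw [U₅, ← pauli_sum_eq_swapGate, kronecker_smul]

theorem U₅_eq_sum_five : U₅ = ∑ j : Fin 5,
    ![(1 / 2 : ℂ) • S0, (1 / 2 : ℂ) • S0, (1 / 2 : ℂ) • S0, (1 / 2 : ℂ) • S0, S3] j ⊗ₖ
      (![I2, σ1, σ2, σ3, I2] j ⊗ₖ ![I2, σ1, σ2, σ3, σ1] j) := by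
  simp [U₅, Fin.sum_univ_five, smul_kronecker, kronecker_add, smul_add, add_assoc]

theorem U₅_mem_unitaryGroup : U₅ ∈ unitaryGroup (Fin 2 × Fin 2 × Fin 2) ℂ := by
  rw [U₅_eq]
  refine kronecker_add_kronecker_mem_unitaryGroup isStarProjection_S0 isStarProjection_S3 ?_ ?_
    (permMatrix_mem_unitaryGroup _) (kronecker_mem_unitary (one_mem _) σ1_mem_unitaryGroup)
  all_goals ext i j; fin_cases i <;> fin_cases j <;> simp [S0, S3]

theorem U₅_submatrix_zero_zero : U₅.submatrix (Prod.mk 0) (Prod.mk 0) = swapGate (Fin 2) ℂ := by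
  ext p q
  simp [U₅_eq, S0, S3]

theorem U₅_submatrix_one_one : U₅.submatrix (Prod.mk 1) (Prod.mk 1) = I2 ⊗ₖ σ1 := by
  ext p q
  simp [U₅_eq, S0, S3]

theorem swapGate_mul_realign_I2_kronecker_σ1 :
    swapGate (Fin 2) ℂ * realign (I2 ⊗ₖ σ1) = realign (I2 ⊗ₖ σ1) := by
  rw [realign_kronecker, mul_vecMulVec, swapGate, permMatrix_mulVec]
  congr 1
  ext ⟨b, b'⟩
  simp [I2, one_apply, eq_comm]

theorem realign_I2_kronecker_σ1_mul_swapGate :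
    realign (I2 ⊗ₖ σ1) * swapGate (Fin 2) ℂ = realign (I2 ⊗ₖ σ1) := by
  rw [realign_kronecker, vecMulVec_mul, swapGate, vecMul_permMatrix]
  congr 1
  ext ⟨c, c'⟩
  fin_cases c <;> fin_cases c' <;> simp [σ1]

theorem realign_I2_kronecker_σ1_mul_self :
    realign (I2 ⊗ₖ σ1) * realign (I2 ⊗ₖ σ1) = 0 := by
  have horth : (fun q : Fin 2 × Fin 2 => σ1 q.1 q.2) ⬝ᵥ (fun p => I2 p.1 p.2) = 0 := by
    simp [dotProduct, Fintype.sum_prod_type, σ1, I2]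
  rw [realign_kronecker, vecMulVec_mul_vecMulVec, horth, zero_smul, vecMulVec_zero]

theorem five_le_of_U₅_eq_sum_kronecker {r : ℕ} {A B C : Fin r → Matrix (Fin 2) (Fin 2) ℂ}
    (h : U₅ = ∑ j, A j ⊗ₖ (B j ⊗ₖ C j)) : 5 ≤ r := by
  have hne : U₅.submatrix (Prod.mk 1) (Prod.mk 1) ≠ 0 := fun h0 => by
    rw [U₅_submatrix_one_one] at h0
    simpa [I2, σ1] using congrFun (congrFun h0 (0, 0)) (0, 1)
  have hunit (t : ℂ) : IsUnit (swapGate (Fin 2) ℂ - t • realign (I2 ⊗ₖ σ1)) :=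
    isUnit_sub_smul_of_commute_of_mul_self_eq_zero
      (Unitary.isUnit_coe (U := ⟨_, permMatrix_mem_unitaryGroup _⟩))
      (realign_I2_kronecker_σ1_mul_swapGate.trans swapGate_mul_realign_I2_kronecker_σ1.symm)
      realign_I2_kronecker_σ1_mul_self t
  obtain ⟨t, ht⟩ := exists_rank_realign_sub_smul_lt h 0 0 1 1 hne
  rw [U₅_submatrix_zero_zero, U₅_submatrix_one_one, realign_sub_smul, realign_swapGate,
    rank_of_isUnit _ (hunit t)] at ht
  simpa [Nat.lt_iff_add_one_le] using ht

theorem stmt4 : U₅ ∈ Matrix.unitaryGroup (Fin 2 × Fin 2 × Fin 2) ℂ ∧ sr U₅ = 5 := by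
  refine ⟨U₅_mem_unitaryGroup, IsLeast.csInf_eq ⟨⟨_, _, _, U₅_eq_sum_five⟩, ?_⟩⟩
  rintro r ⟨A, B, C, h⟩
  exact five_le_of_U₅_eq_sum_kronecker h
end

section
/- The 8×8 complex matrix T = S₁⊗S₃⊗S₀ + S₂⊗S₀⊗S₁ + S₃⊗S₂⊗S₁ + S₁⊗S₂⊗S₂ + S₂⊗S₁⊗S₃ + S₃⊗S₃⊗S₃ has Schmidt rank exactly 6. -/
open Matrix Kronecker Complex

noncomputable def Tmat : Matrix (Fin 2 × Fin 2 × Fin 2) (Fin 2 × Fin 2 × Fin 2) ℂ :=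
  S1 ⊗ₖ (S3 ⊗ₖ S0) + S2 ⊗ₖ (S0 ⊗ₖ S1) + S3 ⊗ₖ (S2 ⊗ₖ S1) +
    S1 ⊗ₖ (S2 ⊗ₖ S2) + S2 ⊗ₖ (S1 ⊗ₖ S3) + S3 ⊗ₖ (S3 ⊗ₖ S3)

/-! Read as a tensor in `ℂ⁴ ⊗ ℂ⁴ ⊗ ℂ⁴`, `Tmat` is a sum of six products of unit vectors, and the
lower bound comes from the substitution method. If the slice `T(·, b₀, ·)` is nonzero, some term of
a decomposition has a middle factor with nonzero `b₀`-coordinate, and subtracting suitable multiples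
of that slice from the other slices `T(·, b, ·)` kills this term. Doing so for `b₀ = (0,0)` and then
`b₀ = (0,1)` removes two terms, but leaves every fiber `T(a, b, ·)` with `a.2 = 1` unchanged, because
`T` vanishes when `a.2 = 1` and `b.1 = 0`. Among these fibers are the four unit vectors of `ℂ⁴`, so
at least four terms are left. -/

def TensorRankLE {R α β γ : Type*} [CommSemiring R] (T : α → β → γ → R) (r : ℕ) : Prop :=
  ∃ (x : Fin r → α → R) (y : Fin r → β → R) (z : Fin r → γ → R),
    ∀ a b c, T a b c = ∑ j, x j a * y j b * z j c

section TensorRank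

open Module Submodule

variable {K : Type*} [Field K] {α β γ : Type*}

theorem TensorRankLE.exists_sub_slice {T : α → β → γ → K} {r : ℕ} (h : TensorRankLE T r)
    {b₀ : β} (hb₀ : ∃ a c, T a b₀ c ≠ 0) :
    ∃ (r' : ℕ) (s : β → K), r = r' + 1 ∧
      TensorRankLE (fun a b c => T a b c - s b * T a b₀ c) r' := by
  obtain ⟨x, y, z, hT⟩ := h
  obtain ⟨j₀, hj₀⟩ : ∃ j, y j b₀ ≠ 0 := by
    by_contra! hy
    obtain ⟨a, c, hac⟩ := hb₀
    simp [hT, hy] at hac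
  obtain ⟨r', rfl⟩ := Nat.exists_eq_add_one_of_ne_zero (Fin.pos j₀).ne'
  set s : β → K := fun b => y j₀ b / y j₀ b₀
  refine ⟨r', s, rfl, fun i => x (j₀.succAbove i),
    fun i b => y (j₀.succAbove i) b - s b * y (j₀.succAbove i) b₀,
    fun i => z (j₀.succAbove i), fun a b c => ?_⟩
  have hs : y j₀ b - s b * y j₀ b₀ = 0 := by simp [s, div_mul_cancel₀ _ hj₀]
  calc T a b c - s b * T a b₀ c
      = ∑ j, x j a * (y j b - s b * y j b₀) * z j c := by
        simp only [hT, Finset.mul_sum, ← Finset.sum_sub_distrib]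
        exact Finset.sum_congr rfl fun j _ => by ring
    _ = _ := by rw [Fin.sum_univ_succAbove _ j₀, hs, mul_zero, zero_mul, zero_add]

theorem TensorRankLE.finrank_span_fibers_le {T : α → β → γ → K} {r : ℕ} (h : TensorRankLE T r) :
    finrank K (span K (Set.range fun p : α × β => T p.1 p.2)) ≤ r := by
  obtain ⟨x, y, z, hT⟩ := h
  have hle : span K (Set.range fun p : α × β => T p.1 p.2) ≤ span K (Set.range z) := by
    rw [span_le]
    rintro _ ⟨⟨a, b⟩, rfl⟩
    have hfiber : T a b = ∑ j, (x j a * y j b) • z j := by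
      funext c
      simp [hT, Finset.sum_apply]
    show T a b ∈ _
    rw [hfiber]
    exact sum_mem fun j _ => smul_mem _ _ (subset_span ⟨j, rfl⟩)
  have : Module.Finite K (span K (Set.range z)) := .span_of_finite K (Set.finite_range z)
  calc _ ≤ finrank K (span K (Set.range z)) := finrank_mono hle
    _ ≤ Fintype.card (Fin r) := finrank_range_le_card z
    _ = r := Fintype.card_fin r

end TensorRank

section TripartiteTensor

variable {R : Type*} [CommSemiring R] {m₁ m₂ m₃ n₁ n₂ n₃ : Type*}

def tripartiteTensor (U : Matrix (m₁ × m₂ × m₃) (n₁ × n₂ × n₃) R) :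
    m₁ × n₁ → m₂ × n₂ → m₃ × n₃ → R :=
  fun a b c => U (a.1, b.1, c.1) (a.2, b.2, c.2)

theorem tensorRankLE_tripartiteTensor {r : ℕ} {U : Matrix (m₁ × m₂ × m₃) (n₁ × n₂ × n₃) R}
    {A : Fin r → Matrix m₁ n₁ R} {B : Fin r → Matrix m₂ n₂ R} {C : Fin r → Matrix m₃ n₃ R}
    (hU : U = ∑ j, A j ⊗ₖ (B j ⊗ₖ C j)) : TensorRankLE (tripartiteTensor U) r :=
  ⟨fun j a => A j a.1 a.2, fun j b => B j b.1 b.2, fun j c => C j c.1 c.2, fun a b c => by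
    simp [tripartiteTensor, hU, Matrix.sum_apply, kroneckerMap_apply, mul_assoc]⟩

end TripartiteTensor

lemma tripartiteTensor_Tmat_eq_zero {a b : Fin 2 × Fin 2} (ha : a.2 = 1) (hb : b.1 = 0)
    (c : Fin 2 × Fin 2) : tripartiteTensor Tmat a b c = 0 := by
  obtain ⟨a₁, a₂⟩ := a
  obtain ⟨b₁, b₂⟩ := b
  obtain ⟨c₁, c₂⟩ := c
  simp only at ha hb
  subst ha hb
  fin_cases a₁ <;> fin_cases b₂ <;> fin_cases c₁ <;> fin_cases c₂ <;>
    simp [tripartiteTensor, Tmat, S0, S1, S2, S3, kroneckerMap_apply]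

lemma exists_tripartiteTensor_Tmat_eq_single (c : Fin 2 × Fin 2) :
    ∃ a b : Fin 2 × Fin 2, a.2 = 1 ∧ tripartiteTensor Tmat a b = Pi.single c 1 := by
  fin_cases c
  on_goal 1 => refine ⟨(0, 1), (1, 1), rfl, ?_⟩
  on_goal 2 => refine ⟨(1, 1), (1, 0), rfl, ?_⟩
  on_goal 3 => refine ⟨(0, 1), (1, 0), rfl, ?_⟩
  on_goal 4 => refine ⟨(1, 1), (1, 1), rfl, ?_⟩
  all_goals
    funext c
    fin_cases c <;> simp [tripartiteTensor, Tmat, S0, S1, S2, S3, kroneckerMap_apply]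

theorem six_le_of_tensorRankLE_tripartiteTensor_Tmat {r : ℕ}
    (h : TensorRankLE (tripartiteTensor Tmat) r) : 6 ≤ r := by
  set T := tripartiteTensor Tmat
  obtain ⟨r₁, s, rfl, h₁⟩ := h.exists_sub_slice (b₀ := (0, 0))
    ⟨(1, 0), (0, 1), by simp [T, tripartiteTensor, Tmat, S0, S1, S2, S3, kroneckerMap_apply]⟩
  obtain ⟨r₂, t, rfl, h₂⟩ := h₁.exists_sub_slice (b₀ := (0, 1))
    ⟨(1, 0), (1, 1), by simp [T, tripartiteTensor, Tmat, S0, S1, S2, S3, kroneckerMap_apply]⟩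
  have hspan : Submodule.span ℂ (Set.range fun p : (Fin 2 × Fin 2) × (Fin 2 × Fin 2) =>
      fun c => T p.1 p.2 c - s p.2 * T p.1 (0, 0) c
        - t p.2 * (T p.1 (0, 1) c - s (0, 1) * T p.1 (0, 0) c)) = ⊤ := by
    rw [eq_top_iff, ← (Pi.basisFun ℂ (Fin 2 × Fin 2)).span_eq, Submodule.span_le]
    rintro _ ⟨c, rfl⟩
    obtain ⟨a, b, ha, hab⟩ := exists_tripartiteTensor_Tmat_eq_single c
    refine Submodule.subset_span ⟨(a, b), ?_⟩
    simpa [T, tripartiteTensor_Tmat_eq_zero ha] using hab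
  have hrank := h₂.finrank_span_fibers_le
  rw [hspan, finrank_top, Module.finrank_fintype_fun_eq_card] at hrank
  simp only [Fintype.card_prod, Fintype.card_fin] at hrank
  omega

theorem stmt8 : sr Tmat = 6 := by
  have h6 : 6 ∈ {r | ∃ A B C : Fin r → Matrix (Fin 2) (Fin 2) ℂ,
      Tmat = ∑ j, A j ⊗ₖ (B j ⊗ₖ C j)} :=
    ⟨![S1, S2, S3, S1, S2, S3], ![S3, S0, S2, S2, S1, S3], ![S0, S1, S1, S2, S3, S3], by
      simp only [Tmat, Fin.sum_univ_six]; rfl⟩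
  refine le_antisymm (Nat.sInf_le h6) (le_csInf ⟨6, h6⟩ ?_)
  rintro r ⟨A, B, C, hT⟩
  exact six_le_of_tensorRankLE_tripartiteTensor_Tmat (tensorRankLE_tripartiteTensor hT)
end

section
/- The 8×8 complex matrix U₈ = S₀⊗S₀⊗S₀ + S₁⊗S₃⊗S₀ + S₂⊗S₀⊗S₁ + S₃⊗S₂⊗S₁ + S₀⊗S₁⊗S₂ + S₁⊗S₂⊗S₂ + S₂⊗S₁⊗S₃ + S₃⊗S₃⊗S₃ has Schmidt rank at least 6. -/
open Matrix Kronecker Complex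

noncomputable def U₈ : Matrix (Fin 2 × Fin 2 × Fin 2) (Fin 2 × Fin 2 × Fin 2) ℂ :=
  S0 ⊗ₖ (S0 ⊗ₖ S0) + S1 ⊗ₖ (S3 ⊗ₖ S0) + S2 ⊗ₖ (S0 ⊗ₖ S1) + S3 ⊗ₖ (S2 ⊗ₖ S1) +
    S0 ⊗ₖ (S1 ⊗ₖ S2) + S1 ⊗ₖ (S2 ⊗ₖ S2) + S2 ⊗ₖ (S1 ⊗ₖ S3) + S3 ⊗ₖ (S3 ⊗ₖ S3)

/-! ### Auxiliary material for the proof -/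

section Aux

/-- rank is subadditive. -/
lemma SRaux.rank_add_le' {n : Type} [Fintype n] (A B : Matrix n n ℂ) :
    (A + B).rank ≤ A.rank + B.rank := by
  simp only [Matrix.rank]
  rw [Matrix.mulVecLin_add]
  have hle : LinearMap.range (A.mulVecLin + B.mulVecLin) ≤
      LinearMap.range A.mulVecLin ⊔ LinearMap.range B.mulVecLin := by
    rintro x ⟨y, rfl⟩
    exact Submodule.mem_sup.2 ⟨A.mulVecLin y, ⟨y, rfl⟩, B.mulVecLin y, ⟨y, rfl⟩, rfl⟩
  refine (Submodule.finrank_mono hle).trans ?_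
  exact Submodule.finrank_add_le_finrank_add_finrank _ _

lemma SRaux.rank_neg' {n : Type} [Fintype n] [DecidableEq n] (A : Matrix n n ℂ) :
    (-A).rank = A.rank := by
  have key : ∀ B : Matrix n n ℂ, (-B).rank ≤ B.rank := by
    intro B
    have : -B = ((-1 : ℂ) • (1 : Matrix n n ℂ)) * B := by
      rw [Matrix.smul_mul, Matrix.one_mul, neg_one_smul]
    rw [this]
    exact Matrix.rank_mul_le_right _ _
  refine le_antisymm (key A) ?_
  have := key (-A)
  rwa [neg_neg] at this

lemma SRaux.rank_mul_eq_zero' {n : Type} [Fintype n] [DecidableEq n] (A B : Matrix n n ℂ)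
    (h : A * B = 0) : A.rank + B.rank ≤ Fintype.card n := by
  have hr : LinearMap.range B.mulVecLin ≤ LinearMap.ker A.mulVecLin := by
    rintro x ⟨y, rfl⟩
    have h2 := congrArg Matrix.mulVecLin h
    rw [Matrix.mulVecLin_mul] at h2
    simpa [LinearMap.mem_ker] using congrFun (congrArg DFunLike.coe h2) y
  have h2 : B.rank ≤ Module.finrank ℂ (LinearMap.ker A.mulVecLin) :=
    Submodule.finrank_mono hr
  have h3 := LinearMap.finrank_range_add_finrank_ker (A.mulVecLin)
  simp only [Module.finrank_pi, Fintype.card] at h3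
  have h4 : A.rank = Module.finrank ℂ (LinearMap.range A.mulVecLin) := rfl
  rw [Fintype.card]
  omega

/-- Strassen-type argument: if `M, N₁, N₂` lie in the span of at most five rank-one
matrices (with weights `t`, `u`, `v`) and `M` is invertible, then the twisted
commutator `N₁ M⁻¹ N₂ - N₂ M⁻¹ N₁` is singular. (Adjugate form.) -/
lemma SRaux.core {ι : Type} [Fintype ι] [DecidableEq ι] (hcard : Fintype.card ι ≤ 5)
    (b c : ι → Fin 4 → ℂ) (t u v : ι → ℂ)
    (M N₁ N₂ : Matrix (Fin 4) (Fin 4) ℂ)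
    (hM : M = ∑ ρ, t ρ • vecMulVec (b ρ) (c ρ))
    (hN₁ : N₁ = ∑ ρ, u ρ • vecMulVec (b ρ) (c ρ))
    (hN₂ : N₂ = ∑ ρ, v ρ • vecMulVec (b ρ) (c ρ))
    (hdet : M.det ≠ 0)
    (hz : ∀ ρ, t ρ = 0 → u ρ = 0 ∧ v ρ = 0) :
    (N₁ * M.adjugate * N₂ - N₂ * M.adjugate * N₁).det = 0 := by
  classical
  set B₀ : Matrix (Fin 4) ι ℂ := Matrix.of (fun i ρ => b ρ i) with hB₀
  set C₀ : Matrix ι (Fin 4) ℂ := Matrix.of (fun ρ j => c ρ j) with hC₀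
  have key : ∀ w : ι → ℂ, B₀ * diagonal w * C₀ = ∑ ρ, w ρ • vecMulVec (b ρ) (c ρ) := by
    intro w
    have h0 : B₀ * diagonal w = Matrix.of (fun i ρ => b ρ i * w ρ) := by
      ext i ρ
      simp [Matrix.mul_diagonal, hB₀]
    rw [h0]
    ext i j
    simp only [Matrix.mul_apply, Matrix.sum_apply, Matrix.smul_apply, Matrix.vecMulVec_apply,
      smul_eq_mul, Matrix.of_apply, hC₀]
    exact Finset.sum_congr rfl (fun ρ _ => by ring)
  have hMf : M = B₀ * diagonal t * C₀ := by rw [key, hM]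
  have hN₁f : N₁ = B₀ * diagonal u * C₀ := by rw [key, hN₁]
  have hN₂f : N₂ = B₀ * diagonal v * C₀ := by rw [key, hN₂]
  have hu : IsUnit M.det := isUnit_iff_ne_zero.2 hdet
  have hMM : M⁻¹ * M = 1 := Matrix.nonsing_inv_mul M hu
  have hMM' : M * M⁻¹ = 1 := Matrix.mul_nonsing_inv M hu
  set w : ι → ℂ := fun ρ => u ρ / t ρ with hw
  set w' : ι → ℂ := fun ρ => v ρ / t ρ with hw'
  have htw : diagonal t * diagonal w = diagonal u := by
    rw [Matrix.diagonal_mul_diagonal]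
    have : (fun ρ => t ρ * w ρ) = u := by
      funext ρ
      by_cases h : t ρ = 0
      · simp [hw, h, (hz ρ h).1]
      · rw [hw]; field_simp
    rw [this]
  have htw' : diagonal t * diagonal w' = diagonal v := by
    rw [Matrix.diagonal_mul_diagonal]
    have : (fun ρ => t ρ * w' ρ) = v := by
      funext ρ
      by_cases h : t ρ = 0
      · simp [hw', h, (hz ρ h).2]
      · rw [hw']; field_simp
    rw [this]
  set Bm : Matrix (Fin 4) ι ℂ := M⁻¹ * B₀ * diagonal t with hBm
  have hBC : Bm * C₀ = 1 := by
    rw [hBm, Matrix.mul_assoc, Matrix.mul_assoc, ← Matrix.mul_assoc B₀, ← hMf, hMM]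
  set K : Matrix ι ι ℂ := C₀ * Bm with hK
  have hKK : K * K = K := by
    rw [hK, Matrix.mul_assoc, ← Matrix.mul_assoc Bm, hBC, Matrix.one_mul]
  have hrankK : 4 ≤ K.rank := by
    have h1 : Bm * K * C₀ = 1 := by
      rw [hK, ← Matrix.mul_assoc, ← Matrix.mul_assoc, hBC, Matrix.one_mul, hBC]
    calc (4 : ℕ) = (1 : Matrix (Fin 4) (Fin 4) ℂ).rank := by simp
    _ = (Bm * K * C₀).rank := by rw [h1]
    _ ≤ (Bm * K).rank := Matrix.rank_mul_le_left _ _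
    _ ≤ K.rank := Matrix.rank_mul_le_right _ _
  set π : Matrix ι ι ℂ := 1 - K with hπ
  have hKπ : K * π = 0 := by rw [hπ, Matrix.mul_sub, Matrix.mul_one, hKK, sub_self]
  have hrankπ : π.rank ≤ 1 := by
    have := SRaux.rank_mul_eq_zero' K π hKπ
    omega
  set X : Matrix (Fin 4) (Fin 4) ℂ := M⁻¹ * N₁ with hX
  set Y : Matrix (Fin 4) (Fin 4) ℂ := M⁻¹ * N₂ with hY
  have hXf : X = Bm * (diagonal w * C₀) := by
    rw [hX, hN₁f, hBm, ← htw]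
    simp only [Matrix.mul_assoc]
  have hYf : Y = Bm * (diagonal w' * C₀) := by
    rw [hY, hN₂f, hBm, ← htw']
    simp only [Matrix.mul_assoc]
  have e1 : X * Y = Bm * (diagonal w * (K * (diagonal w' * C₀))) := by
    rw [hXf, hYf, hK]
    simp only [Matrix.mul_assoc]
  have e2 : Y * X = Bm * (diagonal w' * (K * (diagonal w * C₀))) := by
    rw [hXf, hYf, hK]
    simp only [Matrix.mul_assoc]
  have hK1 : K = 1 - π := by rw [hπ]; abel
  have hdd : Bm * (diagonal w * (diagonal w' * C₀)) = Bm * (diagonal w' * (diagonal w * C₀)) := by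
    rw [← Matrix.mul_assoc (diagonal w), ← Matrix.mul_assoc (diagonal w'),
      Matrix.diagonal_mul_diagonal, Matrix.diagonal_mul_diagonal]
    have : (fun ρ => w ρ * w' ρ) = fun ρ => w' ρ * w ρ := by funext ρ; ring
    rw [this]
  have hcomm : X * Y - Y * X =
      Bm * (diagonal w' * (π * (diagonal w * C₀))) +
        -(Bm * (diagonal w * (π * (diagonal w' * C₀)))) := by
    rw [e1, e2, hK1]
    simp only [Matrix.sub_mul, Matrix.one_mul, Matrix.mul_sub]
    rw [hdd]
    abel
  have hrk : (X * Y - Y * X).rank ≤ 2 := by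
    rw [hcomm]
    refine (SRaux.rank_add_le' _ _).trans ?_
    have r1 : (Bm * (diagonal w' * (π * (diagonal w * C₀)))).rank ≤ 1 := by
      refine le_trans (Matrix.rank_mul_le_right _ _) ?_
      refine le_trans (Matrix.rank_mul_le_right _ _) ?_
      exact le_trans (Matrix.rank_mul_le_left _ _) hrankπ
    have r2 : (-(Bm * (diagonal w * (π * (diagonal w' * C₀))))).rank ≤ 1 := by
      rw [SRaux.rank_neg']
      refine le_trans (Matrix.rank_mul_le_right _ _) ?_
      refine le_trans (Matrix.rank_mul_le_right _ _) ?_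
      exact le_trans (Matrix.rank_mul_le_left _ _) hrankπ
    omega
  have hdetXY : (X * Y - Y * X).det = 0 := by
    by_contra hne
    have h5 : IsUnit (X * Y - Y * X) :=
      (Matrix.isUnit_iff_isUnit_det _).2 (isUnit_iff_ne_zero.2 hne)
    have h6 := Matrix.rank_of_isUnit _ h5
    rw [h6] at hrk
    norm_num [Fintype.card_fin] at hrk
  have hadj : M.det • M⁻¹ = M.adjugate := by
    rw [Matrix.inv_def, Ring.inverse_eq_inv', smul_smul, mul_inv_cancel₀ hdet, one_smul]
  have hMX : M * X = N₁ := by rw [hX, ← Matrix.mul_assoc, hMM', Matrix.one_mul]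
  have hMY : M * Y = N₂ := by rw [hY, ← Matrix.mul_assoc, hMM', Matrix.one_mul]
  have h1 : N₁ * M.adjugate * N₂ = M.det • (N₁ * (M⁻¹ * N₂)) := by
    rw [← hadj, Matrix.mul_smul, Matrix.smul_mul, Matrix.mul_assoc]
  have h2 : N₂ * M.adjugate * N₁ = M.det • (N₂ * (M⁻¹ * N₁)) := by
    rw [← hadj, Matrix.mul_smul, Matrix.smul_mul, Matrix.mul_assoc]
  have h3 : M * (X * Y - Y * X) = N₁ * (M⁻¹ * N₂) - N₂ * (M⁻¹ * N₁) := by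
    rw [Matrix.mul_sub, ← Matrix.mul_assoc M X Y, ← Matrix.mul_assoc M Y X, hMX, hMY, hX, hY]
  have hfin : N₁ * M.adjugate * N₂ - N₂ * M.adjugate * N₁ = M.det • (M * (X * Y - Y * X)) := by
    rw [h1, h2, h3, smul_sub]
  rw [hfin, Matrix.det_smul, Matrix.det_mul, hdetXY]
  simp

/-- The three relevant 4×4 slices of `U₈`. -/
noncomputable def SRaux.P4 : Matrix (Fin 4) (Fin 4) ℂ := !![1,0,0,0; 0,0,1,0; 0,1,0,0; 0,0,0,1]
noncomputable def SRaux.N14 : Matrix (Fin 4) (Fin 4) ℂ := !![0,0,0,0; 0,0,0,0; 0,0,1,0; 1,0,0,0]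
noncomputable def SRaux.N24 : Matrix (Fin 4) (Fin 4) ℂ := !![0,1,0,0; 0,0,0,1; 0,0,0,0; 0,0,0,0]

namespace SRaux

lemma hPP : P4 * P4 = 1 := by
  ext i j
  fin_cases i <;> fin_cases j <;>
    norm_num [P4, Matrix.mul_apply, Fin.sum_univ_succ, Matrix.one_apply,
      Matrix.vecHead, Matrix.vecTail, Fin.ext_iff]

lemma hdetP4 : P4.det = -1 := by
  simp [P4, Matrix.det_succ_row_zero, Fin.sum_univ_succ, Matrix.vecHead, Matrix.vecTail,
    Fin.succAbove]

lemma hadjP4 : P4.adjugate = -P4 := by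
  have h := Matrix.mul_adjugate P4
  rw [hdetP4] at h
  calc P4.adjugate = (P4 * P4) * P4.adjugate := by rw [hPP, Matrix.one_mul]
  _ = P4 * ((-1 : ℂ) • 1) := by rw [Matrix.mul_assoc, h]
  _ = -P4 := by simp

lemma m1 : N14 * P4 = !![0,0,0,0; 0,0,0,0; 0,1,0,0; 1,0,0,0] := by
  ext i j
  fin_cases i <;> fin_cases j <;>
    norm_num [P4, N14, Matrix.mul_apply, Fin.sum_univ_succ, Matrix.vecHead, Matrix.vecTail]

lemma m2 : N14 * P4 * N24 = !![0,0,0,0; 0,0,0,0; 0,0,0,1; 0,1,0,0] := by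
  rw [m1]
  ext i j
  fin_cases i <;> fin_cases j <;>
    norm_num [N24, Matrix.mul_apply, Fin.sum_univ_succ, Matrix.vecHead, Matrix.vecTail]

lemma m3 : N24 * P4 = !![0,0,1,0; 0,0,0,1; 0,0,0,0; 0,0,0,0] := by
  ext i j
  fin_cases i <;> fin_cases j <;>
    norm_num [P4, N24, Matrix.mul_apply, Fin.sum_univ_succ, Matrix.vecHead, Matrix.vecTail]

lemma m4 : N24 * P4 * N14 = !![0,0,1,0; 1,0,0,0; 0,0,0,0; 0,0,0,0] := by
  rw [m3]
  ext i j
  fin_cases i <;> fin_cases j <;>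
    norm_num [N14, Matrix.mul_apply, Fin.sum_univ_succ, Matrix.vecHead, Matrix.vecTail]

lemma hV0 : N14 * P4.adjugate * N24 - N24 * P4.adjugate * N14 =
    !![0,0,1,0; 1,0,0,0; 0,0,0,-1; 0,-1,0,0] := by
  rw [hadjP4, Matrix.mul_neg, Matrix.neg_mul, Matrix.mul_neg, Matrix.neg_mul, m2, m4]
  ext i j
  fin_cases i <;> fin_cases j <;>
    norm_num [Matrix.vecHead, Matrix.vecTail]

lemma hdetV0 : (N14 * P4.adjugate * N24 - N24 * P4.adjugate * N14).det ≠ 0 := by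
  rw [hV0]
  simp [Matrix.det_succ_row_zero, Fin.sum_univ_succ, Matrix.vecHead, Matrix.vecTail,
    Fin.succAbove]

/-- No family of at most five triple Kronecker products can reproduce the three slices. -/
lemma nodecomp {ι : Type} [Fintype ι] [DecidableEq ι] (hcard : Fintype.card ι ≤ 5)
    (b c : ι → Fin 4 → ℂ) (t u v : ι → ℂ)
    (hP : P4 = ∑ ρ, t ρ • vecMulVec (b ρ) (c ρ))
    (h1 : N14 = ∑ ρ, u ρ • vecMulVec (b ρ) (c ρ))
    (h2 : N24 = ∑ ρ, v ρ • vecMulVec (b ρ) (c ρ)) : False := by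
  classical
  set Mp : Matrix (Fin 4) (Fin 4) (Polynomial ℂ) :=
    Matrix.of (fun i j => Polynomial.C (P4 i j) + Polynomial.C (N14 i j) * Polynomial.X
      + Polynomial.C (N24 i j) * Polynomial.X ^ 2) with hMp
  set N1p : Matrix (Fin 4) (Fin 4) (Polynomial ℂ) := N14.map Polynomial.C with hN1p
  set N2p : Matrix (Fin 4) (Fin 4) (Polynomial ℂ) := N24.map Polynomial.C with hN2p
  set Vp : Matrix (Fin 4) (Fin 4) (Polynomial ℂ) :=
    N1p * Mp.adjugate * N2p - N2p * Mp.adjugate * N1p with hVp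
  set l : ι → Polynomial ℂ := fun ρ =>
    if t ρ = 0 ∧ u ρ = 0 ∧ v ρ = 0 then 1
    else Polynomial.C (t ρ) + Polynomial.C (u ρ) * Polynomial.X
      + Polynomial.C (v ρ) * Polynomial.X ^ 2 with hl
  set q : Polynomial ℂ := Mp.det * Vp.det * ∏ ρ, l ρ with hq
  have hmapM : ∀ x : ℂ, (Polynomial.evalRingHom x).mapMatrix Mp
      = P4 + x • N14 + (x ^ 2) • N24 := by
    intro x
    ext i j
    simp [hMp, RingHom.mapMatrix_apply, Matrix.map_apply, Matrix.add_apply, Matrix.smul_apply,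
      smul_eq_mul]
    ring
  have hmapN1 : ∀ x : ℂ, (Polynomial.evalRingHom x).mapMatrix N1p = N14 := by
    intro x; ext i j
    simp [hN1p, RingHom.mapMatrix_apply, Matrix.map_apply]
  have hmapN2 : ∀ x : ℂ, (Polynomial.evalRingHom x).mapMatrix N2p = N24 := by
    intro x; ext i j
    simp [hN2p, RingHom.mapMatrix_apply, Matrix.map_apply]
  have hevalMdet : ∀ x : ℂ, Polynomial.eval x Mp.det = (P4 + x • N14 + (x ^ 2) • N24).det := by
    intro x
    have := RingHom.map_det (Polynomial.evalRingHom x) Mp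
    rw [hmapM] at this
    simpa using this
  have hevalVdet : ∀ x : ℂ, Polynomial.eval x Vp.det =
      (N14 * (P4 + x • N14 + (x ^ 2) • N24).adjugate * N24
        - N24 * (P4 + x • N14 + (x ^ 2) • N24).adjugate * N14).det := by
    intro x
    have hdet := RingHom.map_det (Polynomial.evalRingHom x) Vp
    have hmapV : (Polynomial.evalRingHom x).mapMatrix Vp =
        N14 * (P4 + x • N14 + (x ^ 2) • N24).adjugate * N24
          - N24 * (P4 + x • N14 + (x ^ 2) • N24).adjugate * N14 := by
      rw [hVp, map_sub, _root_.map_mul, _root_.map_mul, _root_.map_mul, _root_.map_mul,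
        RingHom.map_adjugate, hmapM, hmapN1, hmapN2]
    rw [hmapV] at hdet
    simpa using hdet
  have hsum : ∀ x : ℂ, P4 + x • N14 + (x ^ 2) • N24
      = ∑ ρ, (t ρ + u ρ * x + v ρ * x ^ 2) • vecMulVec (b ρ) (c ρ) := by
    intro x
    rw [hP, h1, h2, Finset.smul_sum, Finset.smul_sum,
      ← Finset.sum_add_distrib, ← Finset.sum_add_distrib]
    refine Finset.sum_congr rfl (fun ρ _ => ?_)
    rw [smul_smul, smul_smul, ← add_smul, ← add_smul]
    congr 1
    ring
  have hq0 : ∀ x : ℂ, Polynomial.eval x q = 0 := by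
    intro x
    rw [hq]
    simp only [Polynomial.eval_mul, Polynomial.eval_prod]
    by_cases hdx : (P4 + x • N14 + (x ^ 2) • N24).det = 0
    · rw [hevalMdet, hdx, zero_mul, zero_mul]
    by_cases hlx : ∃ ρ, Polynomial.eval x (l ρ) = 0
    · obtain ⟨ρ, hρ⟩ := hlx
      rw [Finset.prod_eq_zero (Finset.mem_univ ρ) hρ, mul_zero]
    push_neg at hlx
    have hz : ∀ ρ, t ρ + u ρ * x + v ρ * x ^ 2 = 0 → u ρ = 0 ∧ v ρ = 0 := by
      intro ρ h0
      have := hlx ρ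
      rw [hl] at this
      by_cases htri : t ρ = 0 ∧ u ρ = 0 ∧ v ρ = 0
      · exact ⟨htri.2.1, htri.2.2⟩
      · exfalso
        apply this
        simp only [htri, if_false]
        simpa using h0
    have hc := SRaux.core hcard b c (fun ρ => t ρ + u ρ * x + v ρ * x ^ 2) u v
      (P4 + x • N14 + (x ^ 2) • N24) N14 N24 (hsum x) h1 h2 hdx hz
    rw [hevalVdet, hc, mul_zero, zero_mul]
  have hqz : q = 0 := Polynomial.funext (fun x => by rw [hq0, Polynomial.eval_zero])
  rw [hq] at hqz
  rcases mul_eq_zero.1 hqz with h | h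
  · rcases mul_eq_zero.1 h with h | h
    · have := hevalMdet 0
      rw [h] at this
      simp at this
      rw [hdetP4] at this
      norm_num at this
    · have := hevalVdet 0
      rw [h] at this
      simp at this
      exact hdetV0 this.symm
  · obtain ⟨ρ, _, hρ⟩ := Finset.prod_eq_zero_iff.1 h
    rw [hl] at hρ
    by_cases htri : t ρ = 0 ∧ u ρ = 0 ∧ v ρ = 0
    · simp [htri] at hρ
    · simp only [htri, if_false] at hρ
      apply htri
      refine ⟨?_, ?_, ?_⟩
      · have := congrArg (fun p => Polynomial.coeff p 0) hρ
        simpa using this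
      · have := congrArg (fun p => Polynomial.coeff p 1) hρ
        simpa using this
      · have := congrArg (fun p => Polynomial.coeff p 2) hρ
        simpa using this

end SRaux

end Aux

set_option maxHeartbeats 1000000 in
theorem stmt9 : 6 ≤ sr U₈ := by
  classical
  have h8 : U₈ = ∑ j : Fin 8,
      (![S0,S1,S2,S3,S0,S1,S2,S3] j) ⊗ₖ
        ((![S0,S3,S0,S2,S1,S2,S1,S3] j) ⊗ₖ (![S0,S0,S1,S1,S2,S2,S3,S3] j)) := by
    unfold U₈
    simp [Fin.sum_univ_succ]
    abel
  rw [sr]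
  refine le_csInf ⟨8, _, _, _, h8⟩ ?_
  rintro r ⟨A, B, C, hU⟩
  by_contra hlt
  push_neg at hlt
  have hr5 : r ≤ 5 := by omega
  have hslice : ∀ i j k l m n : Fin 2,
      (∑ ρ, A ρ i j * (B ρ k l * C ρ m n)) = U₈ (i,(k,m)) (j,(l,n)) := by
    intro i j k l m n
    rw [hU]
    simp [Matrix.sum_apply, Matrix.kroneckerMap_apply]
  have h1 : SRaux.N14 = ∑ ρ, A ρ 0 1 • vecMulVec
      (![B ρ 0 0, B ρ 0 1, B ρ 1 0, B ρ 1 1]) (![C ρ 0 0, C ρ 0 1, C ρ 1 0, C ρ 1 1]) := by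
    ext k l
    fin_cases k <;> fin_cases l <;>
    · simp [Matrix.sum_apply, Matrix.smul_apply, Matrix.vecMulVec_apply, SRaux.N14,
        Matrix.vecHead, Matrix.vecTail]
      rw [hslice]
      norm_num [U₈, S0, S1, S2, S3, Matrix.kroneckerMap_apply, Matrix.add_apply,
        Matrix.vecHead, Matrix.vecTail]
  have h2 : SRaux.N24 = ∑ ρ, A ρ 1 0 • vecMulVec
      (![B ρ 0 0, B ρ 0 1, B ρ 1 0, B ρ 1 1]) (![C ρ 0 0, C ρ 0 1, C ρ 1 0, C ρ 1 1]) := by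
    ext k l
    fin_cases k <;> fin_cases l <;>
    · simp [Matrix.sum_apply, Matrix.smul_apply, Matrix.vecMulVec_apply, SRaux.N24,
        Matrix.vecHead, Matrix.vecTail]
      rw [hslice]
      norm_num [U₈, S0, S1, S2, S3, Matrix.kroneckerMap_apply, Matrix.add_apply,
        Matrix.vecHead, Matrix.vecTail]
  have h0 : (!![1,0,0,0; 0,0,1,0; 0,0,0,0; 0,0,0,0] : Matrix (Fin 4) (Fin 4) ℂ)
      = ∑ ρ, A ρ 0 0 • vecMulVec
      (![B ρ 0 0, B ρ 0 1, B ρ 1 0, B ρ 1 1]) (![C ρ 0 0, C ρ 0 1, C ρ 1 0, C ρ 1 1]) := by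
    ext k l
    fin_cases k <;> fin_cases l <;>
    · simp [Matrix.sum_apply, Matrix.smul_apply, Matrix.vecMulVec_apply,
        Matrix.vecHead, Matrix.vecTail]
      rw [hslice]
      norm_num [U₈, S0, S1, S2, S3, Matrix.kroneckerMap_apply, Matrix.add_apply,
        Matrix.vecHead, Matrix.vecTail]
  have h3 : (!![0,0,0,0; 0,0,0,0; 0,1,0,0; 0,0,0,1] : Matrix (Fin 4) (Fin 4) ℂ)
      = ∑ ρ, A ρ 1 1 • vecMulVec
      (![B ρ 0 0, B ρ 0 1, B ρ 1 0, B ρ 1 1]) (![C ρ 0 0, C ρ 0 1, C ρ 1 0, C ρ 1 1]) := by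
    ext k l
    fin_cases k <;> fin_cases l <;>
    · simp [Matrix.sum_apply, Matrix.smul_apply, Matrix.vecMulVec_apply,
        Matrix.vecHead, Matrix.vecTail]
      rw [hslice]
      norm_num [U₈, S0, S1, S2, S3, Matrix.kroneckerMap_apply, Matrix.add_apply,
        Matrix.vecHead, Matrix.vecTail]
  have hP : SRaux.P4 = ∑ ρ, (A ρ 0 0 + A ρ 1 1) • vecMulVec
      (![B ρ 0 0, B ρ 0 1, B ρ 1 0, B ρ 1 1]) (![C ρ 0 0, C ρ 0 1, C ρ 1 0, C ρ 1 1]) := by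
    have hsplit : SRaux.P4 = (!![1,0,0,0; 0,0,1,0; 0,0,0,0; 0,0,0,0] : Matrix (Fin 4) (Fin 4) ℂ)
        + !![0,0,0,0; 0,0,0,0; 0,1,0,0; 0,0,0,1] := by
      ext k l
      fin_cases k <;> fin_cases l <;>
        norm_num [SRaux.P4, Matrix.add_apply, Matrix.vecHead, Matrix.vecTail]
    rw [hsplit, h0, h3, ← Finset.sum_add_distrib]
    refine Finset.sum_congr rfl (fun ρ _ => ?_)
    rw [← add_smul]
  exact SRaux.nodecomp (ι := Fin r) (by simpa using hr5)
    (fun ρ => ![B ρ 0 0, B ρ 0 1, B ρ 1 0, B ρ 1 1])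
    (fun ρ => ![C ρ 0 0, C ρ 0 1, C ρ 1 0, C ρ 1 1])
    (fun ρ => A ρ 0 0 + A ρ 1 1) (fun ρ => A ρ 0 1) (fun ρ => A ρ 1 0) hP h1 h2
end

section
/- The three-qubit Toffoli gate T₃ = S₀⊗I₂⊗I₂ + S₃⊗S₀⊗I₂ + S₃⊗S₃⊗σ₁ (an 8×8 complex matrix) has Schmidt rank exactly 2. -/
open Matrix Kronecker Complex

noncomputable def T₃ : Matrix (Fin 2 × Fin 2 × Fin 2) (Fin 2 × Fin 2 × Fin 2) ℂ :=
  S0 ⊗ₖ (I2 ⊗ₖ I2) + S3 ⊗ₖ (S0 ⊗ₖ I2) + S3 ⊗ₖ (S3 ⊗ₖ σ1)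

/-! Since `S0 + S3 = I2`, the gate is `I2 ⊗ I2 ⊗ I2 + S3 ⊗ S3 ⊗ (σ1 - I2)`, so its Schmidt rank is at
most 2. It is nonzero, and it is not a product tensor: the entries of `A ⊗ B ⊗ C` are products, so
exchanging the third-factor indices between two entries leaves the product of the entries unchanged,
whereas for the Toffoli gate `T₃ (000) (000) * T₃ (110) (111) = 1` but
`T₃ (000) (001) * T₃ (110) (110) = 0`. -/

theorem kronecker_kronecker_apply_mul_apply_swap {R α β γ : Type*} [CommSemiring R]
    (A : Matrix α α R) (B : Matrix β β R) (C : Matrix γ γ R)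
    (i i' m m' : α) (j j' n n' : β) (k k' o o' : γ) :
    (A ⊗ₖ (B ⊗ₖ C)) (i, j, k) (i', j', k') * (A ⊗ₖ (B ⊗ₖ C)) (m, n, o) (m', n', o') =
      (A ⊗ₖ (B ⊗ₖ C)) (i, j, o) (i', j', o') * (A ⊗ₖ (B ⊗ₖ C)) (m, n, k) (m', n', k') := by
  simp only [kronecker_apply]
  ring

theorem sr_le_of_eq_sum {U : Matrix (Fin 2 × Fin 2 × Fin 2) (Fin 2 × Fin 2 × Fin 2) ℂ} {r : ℕ}
    (A B C : Fin r → Matrix (Fin 2) (Fin 2) ℂ) (h : U = ∑ j, A j ⊗ₖ (B j ⊗ₖ C j)) :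
    sr U ≤ r :=
  Nat.sInf_le ⟨A, B, C, h⟩

theorem two_le_sr {U : Matrix (Fin 2 × Fin 2 × Fin 2) (Fin 2 × Fin 2 × Fin 2) ℂ} {r : ℕ}
    (A B C : Fin r → Matrix (Fin 2) (Fin 2) ℂ) (h : U = ∑ j, A j ⊗ₖ (B j ⊗ₖ C j))
    (hU : U ≠ 0) (hU_prod : ∀ A B C, U ≠ A ⊗ₖ (B ⊗ₖ C)) : 2 ≤ sr U := by
  refine le_csInf ⟨r, A, B, C, h⟩ ?_
  rintro (_ | _ | m) ⟨A', B', C', h'⟩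
  · exact absurd (by simpa using h') hU
  · exact absurd (by simpa using h') (hU_prod (A' 0) (B' 0) (C' 0))
  · omega

theorem T₃_eq_add : T₃ = I2 ⊗ₖ (I2 ⊗ₖ I2) + S3 ⊗ₖ (S3 ⊗ₖ (σ1 - I2)) := by
  have hI2 : I2 = S0 + S3 := by
    rw [I2, one_fin_two, S0, S3]
    simp
  have hσ1 : σ1 = I2 + (σ1 - I2) := (add_sub_cancel _ _).symm
  -- keep `σ1 - I2` atomic, so that only the other occurrences of `I2` are split into `S0 + S3`
  generalize σ1 - I2 = D at hσ1 ⊢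
  rw [T₃, hσ1, hI2]
  simp only [add_kronecker, kronecker_add]
  abel

theorem T₃_ne_zero : T₃ ≠ 0 := by
  intro h
  simpa [T₃, S0, S3, I2] using congrFun (congrFun h (0, 0, 0)) (0, 0, 0)

theorem T₃_ne_kronecker (A B C : Matrix (Fin 2) (Fin 2) ℂ) : T₃ ≠ A ⊗ₖ (B ⊗ₖ C) := by
  intro h
  have := kronecker_kronecker_apply_mul_apply_swap A B C 0 0 1 1 0 0 1 1 0 0 0 1
  rw [← h] at this
  simp [T₃, S0, S3, σ1, I2] at this

theorem stmt11 : sr T₃ = 2 := by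
  have h : T₃ = ∑ j, ![I2, S3] j ⊗ₖ (![I2, S3] j ⊗ₖ ![I2, σ1 - I2] j) := by
    simpa [Fin.sum_univ_two] using T₃_eq_add
  exact le_antisymm (sr_le_of_eq_sum _ _ _ h) (two_le_sr _ _ _ h T₃_ne_zero T₃_ne_kronecker)
end

section
/- The 8×8 complex matrix U₄ = (T⊗I₂)·(I₂⊗T), where T = S₀⊗I₂ + S₃⊗σ₁ is the CNOT gate, has Schmidt rank exactly 4. -/
open Matrix Kronecker Complex

/-- Reassociation `((ℂ²⊗ℂ²)⊗ℂ²) ≃ (ℂ²⊗(ℂ²⊗ℂ²))` at the level of matrix indices. -/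
def matAssoc (M : Matrix ((Fin 2 × Fin 2) × Fin 2) ((Fin 2 × Fin 2) × Fin 2) ℂ) :
    Matrix (Fin 2 × Fin 2 × Fin 2) (Fin 2 × Fin 2 × Fin 2) ℂ :=
  Matrix.reindex (Equiv.prodAssoc (Fin 2) (Fin 2) (Fin 2))
    (Equiv.prodAssoc (Fin 2) (Fin 2) (Fin 2)) M

/-- The CNOT gate as a 4×4 matrix. -/
def Tcnot : Matrix (Fin 2 × Fin 2) (Fin 2 × Fin 2) ℂ := S0 ⊗ₖ I2 + S3 ⊗ₖ σ1

noncomputable def U₄ : Matrix (Fin 2 × Fin 2 × Fin 2) (Fin 2 × Fin 2 × Fin 2) ℂ :=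
  matAssoc (Tcnot ⊗ₖ I2) * (I2 ⊗ₖ Tcnot)

lemma sig_S0 : σ1 * S0 = S2 := by
  ext i j; fin_cases i <;> fin_cases j <;>
    simp [σ1, S0, S2, Matrix.mul_apply, Fin.sum_univ_two]

lemma sig_S3 : σ1 * S3 = S1 := by
  ext i j; fin_cases i <;> fin_cases j <;>
    simp [σ1, S3, S1, Matrix.mul_apply, Fin.sum_univ_two]

/-- The factors of an explicit four-term decomposition of `U₄`. -/
def Afam : Fin 4 → Matrix (Fin 2) (Fin 2) ℂ := ![S0, S0, S3, S3]
def Bfam : Fin 4 → Matrix (Fin 2) (Fin 2) ℂ := ![S0, S3, S2, S1]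
def Cfam : Fin 4 → Matrix (Fin 2) (Fin 2) ℂ := ![I2, σ1, I2, σ1]

lemma U4_eq : U₄ = ∑ j, Afam j ⊗ₖ (Bfam j ⊗ₖ Cfam j) := by
  have h1 : matAssoc (Tcnot ⊗ₖ I2) = S0 ⊗ₖ (I2 ⊗ₖ I2) + S3 ⊗ₖ (σ1 ⊗ₖ I2) := by
    rw [Tcnot, matAssoc, Matrix.add_kronecker, Matrix.reindex_apply, Matrix.submatrix_add]
    simp only [Pi.add_apply]
    rw [← Matrix.reindex_apply, ← Matrix.reindex_apply, Matrix.kronecker_assoc,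
      Matrix.kronecker_assoc]
  have h2 : (I2 ⊗ₖ Tcnot : Matrix (Fin 2 × Fin 2 × Fin 2) (Fin 2 × Fin 2 × Fin 2) ℂ)
      = I2 ⊗ₖ (S0 ⊗ₖ I2) + I2 ⊗ₖ (S3 ⊗ₖ σ1) := by
    rw [Tcnot, Matrix.kronecker_add]
  rw [U₄, h1, h2, add_mul, mul_add, mul_add,
    ← Matrix.mul_kronecker_mul, ← Matrix.mul_kronecker_mul, ← Matrix.mul_kronecker_mul,
    ← Matrix.mul_kronecker_mul, ← Matrix.mul_kronecker_mul, ← Matrix.mul_kronecker_mul,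
    ← Matrix.mul_kronecker_mul, ← Matrix.mul_kronecker_mul]
  simp only [Fin.sum_univ_four, Afam, Bfam, Cfam, Matrix.cons_val_zero, Matrix.cons_val_one,
    Matrix.head_cons, Matrix.cons_val_two, Matrix.cons_val_three, Matrix.tail_cons,
    I2, Matrix.one_mul, Matrix.mul_one, sig_S0, sig_S3]
  abel

/-- Extract the (b,b') component of the middle tensor factor. -/
def Lfun (b b' : Fin 2) (U : Matrix (Fin 2 × Fin 2 × Fin 2) (Fin 2 × Fin 2 × Fin 2) ℂ) :
    Matrix (Fin 2 × Fin 2) (Fin 2 × Fin 2) ℂ :=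
  Matrix.of fun p q => U (p.1, b, p.2) (q.1, b', q.2)

lemma Lfun_sum {n : ℕ} (b b' : Fin 2)
    (M : Fin n → Matrix (Fin 2 × Fin 2 × Fin 2) (Fin 2 × Fin 2 × Fin 2) ℂ) :
    Lfun b b' (∑ j, M j) = ∑ j, Lfun b b' (M j) := by
  ext p q
  simp [Lfun, Matrix.sum_apply]

lemma Lfun_simple (b b' : Fin 2) (A B C : Matrix (Fin 2) (Fin 2) ℂ) :
    Lfun b b' (A ⊗ₖ (B ⊗ₖ C)) = B b b' • (A ⊗ₖ C) := by
  ext p q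
  simp [Lfun, Matrix.kroneckerMap_apply]
  ring

/-- The four matrices that `Lfun` extracts from `U₄`. -/
def tfam : Fin 4 → Matrix (Fin 2 × Fin 2) (Fin 2 × Fin 2) ℂ :=
  ![S0 ⊗ₖ I2, S0 ⊗ₖ σ1, S3 ⊗ₖ I2, S3 ⊗ₖ σ1]

lemma tfam_li : LinearIndependent ℂ tfam := by
  rw [Fintype.linearIndependent_iff]
  intro g hg i
  have h := fun p q => congrFun (congrFun hg p) q
  have h0 := h (0, 0) (0, 0)
  have h1 := h (0, 0) (0, 1)
  have h2 := h (1, 0) (1, 0)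
  have h3 := h (1, 0) (1, 1)
  simp only [Fin.sum_univ_four, tfam, Matrix.cons_val_zero, Matrix.cons_val_one,
    Matrix.head_cons, Matrix.cons_val_two, Matrix.cons_val_three, Matrix.tail_cons,
    Matrix.add_apply, Matrix.smul_apply, Matrix.kroneckerMap_apply, Matrix.zero_apply,
    S0, S3, σ1, I2, Matrix.one_apply, smul_eq_mul] at h0 h1 h2 h3
  norm_num at h0 h1 h2 h3
  fin_cases i <;> simp [h0, h1, h2, h3]

theorem stmt16 : sr U₄ = 4 := by
  have hmem : (4 : ℕ) ∈ {r | ∃ A B C : Fin r → Matrix (Fin 2) (Fin 2) ℂ,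
      U₄ = ∑ j, A j ⊗ₖ (B j ⊗ₖ C j)} := ⟨Afam, Bfam, Cfam, U4_eq⟩
  have hlb : ∀ r ∈ {r | ∃ A B C : Fin r → Matrix (Fin 2) (Fin 2) ℂ,
      U₄ = ∑ j, A j ⊗ₖ (B j ⊗ₖ C j)}, 4 ≤ r := by
    rintro r ⟨A, B, C, hU⟩
    by_contra hr
    push_neg at hr
    -- the four extracted matrices lie in the span of `r ≤ 3` matrices
    set v : Fin r → Matrix (Fin 2 × Fin 2) (Fin 2 × Fin 2) ℂ := fun j => A j ⊗ₖ C j with hv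
    set W : Submodule ℂ (Matrix (Fin 2 × Fin 2) (Fin 2 × Fin 2) ℂ) :=
      Submodule.span ℂ (Set.range v) with hW
    have hLU : ∀ b b', Lfun b b' U₄ = ∑ j : Fin r, B j b b' • v j := by
      intro b b'
      rw [hU, Lfun_sum]
      simp only [Lfun_simple, hv]
    have hLU4 : ∀ b b', Lfun b b' U₄ = ∑ j : Fin 4, Bfam j b b' • (Afam j ⊗ₖ Cfam j) := by
      intro b b'
      rw [U4_eq, Lfun_sum]
      simp only [Lfun_simple]
    have hWmem : ∀ i, tfam i ∈ W := by
      have hspan : ∀ b b', Lfun b b' U₄ ∈ W := by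
        intro b b'
        rw [hLU b b']
        exact Submodule.sum_mem _ fun j _ =>
          Submodule.smul_mem _ _ (Submodule.subset_span ⟨j, rfl⟩)
      intro i
      have e0 : tfam 0 = Lfun 0 0 U₄ := by
        rw [hLU4]
        simp [tfam, Bfam, Afam, Cfam, Fin.sum_univ_four, S0, S1, S2, S3]
      have e1 : tfam 1 = Lfun 1 1 U₄ := by
        rw [hLU4]
        simp [tfam, Bfam, Afam, Cfam, Fin.sum_univ_four, S0, S1, S2, S3]
      have e2 : tfam 2 = Lfun 1 0 U₄ := by
        rw [hLU4]
        simp [tfam, Bfam, Afam, Cfam, Fin.sum_univ_four, S0, S1, S2, S3]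
      have e3 : tfam 3 = Lfun 0 1 U₄ := by
        rw [hLU4]
        simp [tfam, Bfam, Afam, Cfam, Fin.sum_univ_four, S0, S1, S2, S3]
      have m0 : tfam 0 ∈ W := by rw [e0]; exact hspan 0 0
      have m1 : tfam 1 ∈ W := by rw [e1]; exact hspan 1 1
      have m2 : tfam 2 ∈ W := by rw [e2]; exact hspan 1 0
      have m3 : tfam 3 ∈ W := by rw [e3]; exact hspan 0 1
      fin_cases i
      · exact m0
      · exact m1
      · exact m2
      · exact m3
    have hle : Submodule.span ℂ (Set.range tfam) ≤ W := by
      rw [Submodule.span_le]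
      rintro x ⟨i, rfl⟩
      exact hWmem i
    have h4 : Module.finrank ℂ (Submodule.span ℂ (Set.range tfam)) = 4 := by
      rw [finrank_span_eq_card tfam_li]
      simp
    have hWle : Module.finrank ℂ W ≤ r := by
      classical
      refine (finrank_span_le_card (Set.range v)).trans ?_
      rw [Set.toFinset_card]
      exact (Fintype.card_range_le v).trans (by simp)
    have := Submodule.finrank_mono hle
    omega
  exact le_antisymm (Nat.sInf_le hmem) (le_csInf ⟨4, hmem⟩ hlb)
end
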